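/- arXiv:2102.01198 — 4 statements merged into one kernel-verified Lean document; each statement's English description precedes it below -/
import Mathlib

section
/- Let λ ∈ (0,1/2), Γ > 0, and let P be a non-discrete probability measure on ℝ. If the channel W_P with additive white noise P has positive message transmission feedback capacity with average power constraint Γ, then there exists a blocklength n_s (depending only on λ, Γ and P) such that for every positive integer N and every n ≥ n_s there exists an (n, N, λ₁, λ₂) deterministic identification feedback code for W_P with average power constraint Γ and with λ₁ ≤ λ and λ₂ ≤ λ. -/
open MeasureTheory

noncomputable section

/-- A feedback encoding function of length `n`: the `t`-th component maps the
previous `t` channel outputs to the next channel input. -/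
def FeedbackFn (n : ℕ) := (t : Fin n) → (Fin (t : ℕ) → ℝ) → ℝ

/-- All components of the feedback encoding function are measurable. -/
def FeedbackFn.Meas {n : ℕ} (f : FeedbackFn n) : Prop := ∀ t, Measurable (f t)

/-- The output sequence: yₜ = fᵗ(y₁,…,y_{t−1}) + zₜ. -/
def outSeq {n : ℕ} (f : FeedbackFn n) (z : Fin n → ℝ) : Fin n → ℝ
  | t => f t (fun s => outSeq f z ⟨s.1, s.2.trans t.2⟩) + z t
termination_by t => (t : ℕ)

/-- Output distribution `W_P^n(·|f)` of the additive-noise channel with noise law `P`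
under the feedback encoding function `f`: the pushforward of `P^⊗n` under `outSeq f`. -/
def Wn {n : ℕ} (P : Measure ℝ) (f : FeedbackFn n) : Measure (Fin n → ℝ) :=
  (Measure.pi fun _ : Fin n => P).map (outSeq f)

/-- Average power constraint `Γ`. -/
def AvgPower {n : ℕ} (f : FeedbackFn n) (Γ : ℝ) : Prop :=
  ∀ y : Fin n → ℝ, ∑ t : Fin n, (f t fun s => y ⟨s.1, s.2.trans t.2⟩) ^ 2 ≤ n * Γ

/-- Peak power constraint `Γ`. -/
def PeakPower {n : ℕ} (f : FeedbackFn n) (Γ : ℝ) : Prop :=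
  ∀ (t : Fin n) (y : Fin (t : ℕ) → ℝ), |f t y| ≤ Γ

/-- An `(n, N, λ₁, λ₂)` deterministic identification feedback code for `W_P`
with average power constraint `Γ`. -/
def IsIDCodeAvg (P : Measure ℝ) (n N : ℕ) (lam₁ lam₂ Γ : ℝ)
    (f : Fin N → FeedbackFn n) (D : Fin N → Set (Fin n → ℝ)) : Prop :=
  (∀ i, (f i).Meas ∧ AvgPower (f i) Γ ∧ MeasurableSet (D i)) ∧
  (∀ i, Wn P (f i) (D i)ᶜ ≤ ENNReal.ofReal lam₁) ∧
  (∀ i j, i ≠ j → Wn P (f i) (D j) ≤ ENNReal.ofReal lam₂)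

/-- An `(n, M, λ)` deterministic message transmission feedback code for `W_P`
with average power constraint `Γ`. -/
def IsMTCodeAvg (P : Measure ℝ) (n M : ℕ) (lam Γ : ℝ)
    (f : Fin M → FeedbackFn n) (D : Fin M → Set (Fin n → ℝ)) : Prop :=
  (∀ i, (f i).Meas ∧ AvgPower (f i) Γ ∧ MeasurableSet (D i)) ∧
  (∀ i j, i ≠ j → Disjoint (D i) (D j)) ∧
  (∀ i, Wn P (f i) (D i)ᶜ ≤ ENNReal.ofReal lam)

/-- `W_P` has positive message transmission feedback capacity with average power
constraint `Γ`. -/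
def PosCapAvg (P : Measure ℝ) (Γ : ℝ) : Prop :=
  ∃ R : ℝ, 0 < R ∧ ∀ lam δ : ℝ, 0 < lam → 0 < δ → ∃ n₀ : ℕ, ∀ n : ℕ, n₀ ≤ n →
    ∃ M : ℕ, 0 < M ∧ (∃ f D, IsMTCodeAvg P n M lam Γ f D) ∧
      R - δ ≤ Real.logb 2 M / n

/-!
During the first `k` channel uses the sender transmits `0`, so both ends observe (the receiver
directly, the sender through the feedback) the noise vector `u ∈ ℝᵏ`: common randomness. The atoms
of `Pᵏ` are the points of `Ēᵏ`, of total mass `P(Ē)ᵏ → 0`; off them the law of `u` is atomless,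
so after a Borel embedding `ℝᵏ → ℝ` its cdf value is uniform on `[0, 1]`, and the base-`M` digits
of that value give countably many maps `Tᵢ : ℝᵏ → Fin M`, any two of which agree with probability
at most `1 / M`. Identity `i` sends the message `Tᵢ(u)` with a transmission code of `M` messages
and error `λ/2`. An error of the first kind is a transmission error; one of the second kind needs
`Tᵢ(u) = Tⱼ(u)` or a transmission error. Positive capacity makes `M` as large as needed for all
long blocklengths with `k` fixed, whatever the number of identities.
-/

open Set ProbabilityTheory
open scoped ENNReal Finset

lemma outSeq_apply {n : ℕ} (f : FeedbackFn n) (z : Fin n → ℝ) (t : Fin n) :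
    outSeq f z t = f t (fun s => outSeq f z ⟨s, s.2.trans t.2⟩) + z t := by
  rw [outSeq]

lemma FeedbackFn.apply_congr {n : ℕ} (f : FeedbackFn n) {t t' : Fin n} (h : t = t')
    {y : Fin t → ℝ} {y' : Fin t' → ℝ} (hy : ∀ r : Fin t, y r = y' (r.cast (by rw [h]))) :
    f t y = f t' y' := by
  subst h
  congr
  funext r
  exact hy r

lemma measurable_outSeq {n : ℕ} {f : FeedbackFn n} (hf : f.Meas) : Measurable (outSeq f) := by
  suffices h : ∀ t (ht : t < n), Measurable fun z => outSeq f z ⟨t, ht⟩ from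
    measurable_pi_lambda _ fun t => h t t.2
  intro t
  induction t using Nat.strong_induction_on with
  | _ t ih =>
    intro ht
    simp_rw [outSeq_apply f _ ⟨t, ht⟩]
    exact ((hf _).comp (measurable_pi_lambda _ fun s => ih s s.2 _)).add (measurable_pi_apply _)

lemma Wn_apply {n : ℕ} (P : Measure ℝ) {f : FeedbackFn n} (hf : f.Meas) {s : Set (Fin n → ℝ)}
    (hs : MeasurableSet s) : Wn P f s = Measure.pi (fun _ => P) (outSeq f ⁻¹' s) :=
  Measure.map_apply (measurable_outSeq hf) hs

lemma isProbabilityMeasure_Wn (P : Measure ℝ) [IsProbabilityMeasure P] {n : ℕ} {f : FeedbackFn n}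
    (hf : f.Meas) : IsProbabilityMeasure (Wn P f) :=
  Measure.isProbabilityMeasure_map (measurable_outSeq hf).aemeasurable

lemma measurePreserving_finAddSplit {X : Type*} [MeasurableSpace X] (μ : Measure X)
    [SigmaFinite μ] (k m : ℕ) :
    MeasurePreserving (fun z : Fin (k + m) → X => (z ∘ Fin.castAdd m, z ∘ Fin.natAdd k))
      (Measure.pi fun _ => μ) ((Measure.pi fun _ => μ).prod (Measure.pi fun _ => μ)) := by
  convert (measurePreserving_sumPiEquivProdPi fun _ : Fin k ⊕ Fin m => μ).comp
    ((measurePreserving_piCongrLeft (fun _ => μ) finSumFinEquiv).symm _) using 1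
  funext z
  ext s <;>
    simp [MeasurableEquiv.piCongrLeft, MeasurableEquiv.sumPiEquivProdPi, Equiv.sumPiEquivProdPi]

lemma measurableSet_setOf_snd_mem {ι X : Type*} [MeasurableSpace ι] [Countable ι]
    [MeasurableSingletonClass ι] [MeasurableSpace X] {D : ι → Set X}
    (hD : ∀ i, MeasurableSet (D i)) : MeasurableSet {q : ι × X | q.2 ∈ D q.1} :=
  measurableSet_setOfPred.2 <| measurable_from_prod_countable_right fun i =>
    measurableSet_setOfPred.1 (hD i)

lemma measurableSet_setOf_natAdd_mem {k m M : ℕ} {S : (Fin k → ℝ) → Fin M} (hS : Measurable S)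
    {D : Fin M → Set (Fin m → ℝ)} (hD : ∀ c, MeasurableSet (D c)) :
    MeasurableSet {y : Fin (k + m) → ℝ | y ∘ Fin.natAdd k ∈ D (S (y ∘ Fin.castAdd m))} :=
  (measurableSet_setOf_snd_mem hD).preimage <|
    (hS.comp (measurable_pi_lambda _ fun _ => measurable_pi_apply _)).prodMk
      (measurable_pi_lambda _ fun _ => measurable_pi_apply _)

namespace FeedbackFn

def seeded {k m M : ℕ} (T : (Fin k → ℝ) → Fin M) (g : Fin M → FeedbackFn m) :
    FeedbackFn (k + m) := fun t =>
  if h : (t : ℕ) < k then fun _ => 0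
  else fun y => g (T fun s => y ⟨s, by omega⟩) ⟨t - k, by omega⟩
    fun r => y ⟨k + r, by have : (r : ℕ) < t - k := r.2; omega⟩

section Seeded

variable {k m M : ℕ} (T : (Fin k → ℝ) → Fin M) (g : Fin M → FeedbackFn m)

lemma seeded_castAdd (s : Fin k) (y : Fin s → ℝ) : seeded T g (Fin.castAdd m s) y = 0 := by
  simp [seeded]

lemma seeded_natAdd (s : Fin m) (y : Fin (k + s) → ℝ) :
    seeded T g (Fin.natAdd k s) y =
      g (T fun r => y ⟨r, by omega⟩) s fun r => y ⟨k + r, by omega⟩ := by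
  simp only [seeded, Fin.val_natAdd, show ¬ k + (s : ℕ) < k by omega, dif_neg, not_false_eq_true]
  exact (g _).apply_congr (Fin.ext (Nat.add_sub_cancel_left ..)) fun r => rfl

lemma outSeq_seeded_castAdd (z : Fin (k + m) → ℝ) (s : Fin k) :
    outSeq (seeded T g) z (Fin.castAdd m s) = z (Fin.castAdd m s) := by
  rw [outSeq_apply, seeded_castAdd, zero_add]

lemma outSeq_seeded_natAdd (z : Fin (k + m) → ℝ) (s : Fin m) :
    outSeq (seeded T g) z (Fin.natAdd k s) =
      outSeq (g (T (z ∘ Fin.castAdd m))) (z ∘ Fin.natAdd k) s := by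
  induction s using Fin.strong_induction_on with
  | _ s ih =>
    rw [outSeq_apply, outSeq_apply, seeded_natAdd]
    congr 3
    · funext r
      exact outSeq_seeded_castAdd T g z r
    · funext r
      exact ih ⟨r, r.2.trans s.2⟩ r.2

lemma Meas.seeded (hT : Measurable T) (hg : ∀ c, (g c).Meas) : (seeded T g).Meas := by
  intro t
  by_cases h : (t : ℕ) < k
  · simp only [FeedbackFn.seeded, dif_pos h]
    exact measurable_const
  · simp only [FeedbackFn.seeded, dif_neg h]
    have hcodeword : Measurable fun p : Fin M × (Fin (t - k) → ℝ) => g p.1 ⟨t - k, by omega⟩ p.2 :=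
      measurable_from_prod_countable_right fun c => hg c ⟨t - k, by omega⟩
    exact hcodeword.comp ((hT.comp (measurable_pi_lambda _ fun _ => measurable_pi_apply _)).prodMk
      (measurable_pi_lambda _ fun _ => measurable_pi_apply _))

lemma _root_.AvgPower.seeded {Γ : ℝ} (hΓ : 0 ≤ Γ) (hg : ∀ c, AvgPower (g c) Γ) :
    AvgPower (seeded T g) Γ := by
  intro y
  rw [Fin.sum_univ_add]
  simp only [seeded_castAdd, seeded_natAdd, zero_pow two_ne_zero, Finset.sum_const_zero, zero_add,
    Nat.cast_add]
  calc _ ≤ (m : ℝ) * Γ := hg (T (y ∘ Fin.castAdd m)) (y ∘ Fin.natAdd k)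
    _ ≤ (k + m) * Γ := by gcongr; exact le_add_of_nonneg_left k.cast_nonneg

variable {T g}

lemma Wn_seeded_apply (P : Measure ℝ) [IsProbabilityMeasure P] (hT : Measurable T)
    (hg : ∀ c, (g c).Meas) {S : (Fin k → ℝ) → Fin M} (hS : Measurable S)
    {D : Fin M → Set (Fin m → ℝ)} (hD : ∀ c, MeasurableSet (D c)) :
    Wn P (seeded T g) {y | y ∘ Fin.natAdd k ∈ D (S (y ∘ Fin.castAdd m))} =
      ∫⁻ u, Wn P (g (T u)) (D (S u)) ∂Measure.pi fun _ => P := by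
  have hsplit := measurePreserving_finAddSplit P k m
  have hQ : MeasurableSet {p : (Fin k → ℝ) × (Fin m → ℝ) | outSeq (g (T p.1)) p.2 ∈ D (S p.1)} :=
    (measurableSet_setOf_snd_mem (D := fun c : Fin M × Fin M => outSeq (g c.1) ⁻¹' D c.2)
      fun c => measurable_outSeq (hg c.1) (hD c.2)).preimage
        (((hT.comp measurable_fst).prodMk (hS.comp measurable_fst)).prodMk measurable_snd)
  have hpre : outSeq (seeded T g) ⁻¹' {y | y ∘ Fin.natAdd k ∈ D (S (y ∘ Fin.castAdd m))} =
      (fun z : Fin (k + m) → ℝ => (z ∘ Fin.castAdd m, z ∘ Fin.natAdd k)) ⁻¹'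
        {p | outSeq (g (T p.1)) p.2 ∈ D (S p.1)} := by
    ext z
    have hhead : outSeq (seeded T g) z ∘ Fin.castAdd m = z ∘ Fin.castAdd m :=
      funext (outSeq_seeded_castAdd T g z)
    have htail : outSeq (seeded T g) z ∘ Fin.natAdd k =
        outSeq (g (T (z ∘ Fin.castAdd m))) (z ∘ Fin.natAdd k) :=
      funext (outSeq_seeded_natAdd T g z)
    simp only [mem_preimage, mem_ofPred_eq, hhead, htail]
  rw [Wn_apply P (Meas.seeded T g hT hg) (measurableSet_setOf_natAdd_mem hS hD), hpre,
    hsplit.measure_preimage hQ.nullMeasurableSet, Measure.prod_apply hQ]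
  exact lintegral_congr fun u => (Wn_apply P (hg (T u)) (hD (S u))).symm

end Seeded

end FeedbackFn

theorem IsMTCodeAvg.isIDCodeAvg_seeded {P : Measure ℝ} [IsProbabilityMeasure P] {k m M N : ℕ}
    {lam κ Γ : ℝ} {g : Fin M → FeedbackFn m} {D : Fin M → Set (Fin m → ℝ)}
    (hcode : IsMTCodeAvg P m M lam Γ g D) (hΓ : 0 ≤ Γ) (hlam : 0 ≤ lam) (hκ : 0 ≤ κ)
    {T : Fin N → (Fin k → ℝ) → Fin M} (hT : ∀ i, Measurable (T i))
    (hcoll : ∀ i j, i ≠ j → Measure.pi (fun _ => P) {u | T i u = T j u} ≤ ENNReal.ofReal κ) :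
    IsIDCodeAvg P (k + m) N lam (lam + κ) Γ (fun i => FeedbackFn.seeded (T i) g)
      (fun i => {y | y ∘ Fin.natAdd k ∈ D (T i (y ∘ Fin.castAdd m))}) := by
  obtain ⟨hg, hdisj, herr⟩ := hcode
  have hprob (c : Fin M) := isProbabilityMeasure_Wn P (hg c).1
  refine ⟨fun i => ⟨.seeded _ g (hT i) fun c => (hg c).1, .seeded _ g hΓ fun c => (hg c).2.1,
    measurableSet_setOf_natAdd_mem (hT i) fun c => (hg c).2.2⟩, fun i => ?_, fun i j hij => ?_⟩
  · change Wn P _ {y | _ ∈ (D _)ᶜ} ≤ _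
    rw [FeedbackFn.Wn_seeded_apply P (hT i) (fun c => (hg c).1) (hT i)
      fun c => (hg c).2.2.compl]
    calc _ ≤ ∫⁻ _, ENNReal.ofReal lam ∂Measure.pi fun _ => P := lintegral_mono fun u => herr _
      _ = ENNReal.ofReal lam := by simp
  · have hdecode (u) : Wn P (g (T i u)) (D (T j u)) ≤
        {u | T i u = T j u}.indicator 1 u + ENNReal.ofReal lam := by
      by_cases h : T i u = T j u
      · simpa [h] using prob_le_one.trans le_self_add
      · calc _ ≤ Wn P (g (T i u)) (D (T i u))ᶜ :=
              measure_mono (hdisj _ _ h).subset_compl_left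
          _ ≤ _ := (herr _).trans le_add_self
    rw [FeedbackFn.Wn_seeded_apply P (hT i) (fun c => (hg c).1) (hT j) fun c => (hg c).2.2]
    calc _ ≤ ∫⁻ u, {u | T i u = T j u}.indicator 1 u + ENNReal.ofReal lam ∂Measure.pi fun _ => P :=
          lintegral_mono hdecode
      _ = Measure.pi (fun _ => P) {u | T i u = T j u} + ENNReal.ofReal lam := by
          rw [lintegral_add_right _ measurable_const,
            lintegral_indicator_one (measurableSet_eq_fun (hT i) (hT j))]
          simp
      _ ≤ ENNReal.ofReal κ + ENNReal.ofReal lam := by gcongr; exact hcoll i j hij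
      _ = ENNReal.ofReal (lam + κ) := by rw [ENNReal.ofReal_add hlam hκ, add_comm]

section Cdf

variable {ν : Measure ℝ} [IsProbabilityMeasure ν] [NullSingletonClass ν]

lemma continuous_cdf_of_nullSingletonClass : Continuous (cdf ν) := by
  refine continuous_iff_continuousAt.2 fun x =>
    (monotone_cdf ν).continuousAt_iff_leftLim_eq_rightLim.2 ?_
  have h := (cdf ν).measure_singleton x
  rw [measure_cdf, measure_singleton, eq_comm, ENNReal.ofReal_eq_zero, sub_nonpos] at h
  rw [StieltjesFunction.rightLim_eq]
  exact le_antisymm ((monotone_cdf ν).leftLim_le le_rfl) h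

lemma measure_cdf_le_of_lt_one {t : ℝ} (ht : t < 1) :
    ν {x | cdf ν x ≤ t} = ENNReal.ofReal t := by
  set S := {x | cdf ν x ≤ t}
  rcases S.eq_empty_or_nonempty with hS | hS
  · have ht0 : t ≤ 0 := by
      by_contra! ht0
      obtain ⟨x, hx⟩ := ((tendsto_cdf_atBot ν).eventually (gt_mem_nhds ht0)).exists
      exact hS.subset hx.le
    rw [hS, measure_empty, ENNReal.ofReal_of_nonpos ht0]
  have hbdd : BddAbove S := by
    obtain ⟨b, hb⟩ := ((tendsto_cdf_atTop ν).eventually (lt_mem_nhds ht)).exists_forall_of_atTop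
    exact ⟨b, fun x hx => not_lt.1 fun hbx => (hb x hbx.le).not_ge hx⟩
  have hcont := continuous_cdf_of_nullSingletonClass (ν := ν)
  have hmem : sSup S ∈ S := (isClosed_le hcont continuous_const).csSup_mem hS hbdd
  have hSeq : S = Iic (sSup S) :=
    Subset.antisymm (fun x hx => le_csSup hbdd hx) fun x hx => (monotone_cdf ν hx).trans hmem
  have hcdf : cdf ν (sSup S) = t := by
    refine le_antisymm hmem (not_lt.1 fun hlt => ?_)
    obtain ⟨y, hyt, hy⟩ := (((hcont.tendsto _).eventually (gt_mem_nhds hlt)).filter_mono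
      nhdsWithin_le_nhds |>.and (self_mem_nhdsWithin (s := Ioi (sSup S)))).exists
    exact (le_csSup hbdd (le_of_lt hyt : cdf ν y ≤ t)).not_gt hy
  rw [hSeq, ← ofReal_cdf, hcdf]

lemma map_cdf_of_nullSingletonClass : ν.map (cdf ν) = volume.restrict (Icc 0 1) := by
  refine Measure.ext_of_Iic _ _ fun t => ?_
  rw [Measure.map_apply (monotone_cdf ν).measurable measurableSet_Iic,
    Measure.restrict_apply measurableSet_Iic]
  rcases lt_or_ge t 1 with ht1 | ht1
  · change ν {x | cdf ν x ≤ t} = _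
    have hIcc : Iic t ∩ Icc 0 1 = Icc 0 t := by
      ext x
      simp only [mem_inter_iff, mem_Iic, mem_Icc]
      exact ⟨fun h => ⟨h.2.1, h.1⟩, fun h => ⟨h.2, h.1, h.2.trans ht1.le⟩⟩
    rw [measure_cdf_le_of_lt_one ht1, hIcc, Real.volume_Icc, sub_zero]
  · rw [show cdf ν ⁻¹' Iic t = univ from eq_univ_of_forall fun x => (cdf_le_one ν x).trans ht1,
      measure_univ, inter_eq_right.2 (Icc_subset_Iic_self.trans (Iic_subset_Iic.2 ht1)),
      Real.volume_Icc]
    simp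

end Cdf

def digit (M : ℕ) [NeZero M] (j : ℕ) (v : ℝ) : Fin M := Fin.ofNat M ⌊v * M ^ j⌋₊

lemma measurable_digit (M : ℕ) [NeZero M] (j : ℕ) : Measurable (digit M j) :=
  measurable_from_nat.comp (Nat.measurable_floor.comp (measurable_id.mul_const _))

lemma floor_mul_pow_eq_div {M I J : ℕ} (hM : M ≠ 0) (hIJ : I ≤ J) (v : ℝ) :
    ⌊v * M ^ I⌋₊ = ⌊v * M ^ J⌋₊ / M ^ (J - I) := by
  have hMJI : (M : ℝ) ^ (J - I) ≠ 0 := pow_ne_zero _ (Nat.cast_ne_zero.2 hM)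
  rw [← Nat.floor_div_natCast, Nat.cast_pow, mul_div_assoc, div_eq_of_eq_mul hMJI
    (by rw [← pow_add, Nat.add_sub_cancel' hIJ])]

/-- Such a `t` is determined by `t / M`, since its last digit `t % M` is also its digit at
position `J - I`. -/
lemma card_filter_digit_eq_le {M I J : ℕ} (hM : 0 < M) (hIJ : I < J) :
    #{t ∈ Finset.range (M ^ J) | t / M ^ (J - I) % M = t % M} ≤ M ^ (J - 1) := by
  obtain ⟨L, rfl⟩ : ∃ L, J = L + 1 := ⟨J - 1, by omega⟩
  have hdiv (t : ℕ) : t / M ^ (L + 1 - I) = t / M / M ^ (L - I) := by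
    rw [Nat.div_div_eq_div_mul, ← pow_succ', show L - I + 1 = L + 1 - I by omega]
  rw [Nat.add_sub_cancel]
  refine (Finset.card_le_card_of_injOn (t := Finset.range (M ^ L)) (· / M) (fun t ht => ?_)
    fun a ha b hb hab => ?_).trans_eq (Finset.card_range _)
  · simp only [Finset.coe_filter, Finset.mem_range, mem_ofPred_eq] at ht
    simpa [Nat.div_lt_iff_lt_mul hM, ← pow_succ] using ht.1
  · simp only [Finset.coe_filter, Finset.mem_range, mem_ofPred_eq] at ha hb
    have hab : a / M = b / M := hab
    have hmod : a % M = b % M := by rw [← ha.2, ← hb.2, hdiv, hdiv, hab]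
    rw [← Nat.div_add_mod a M, ← Nat.div_add_mod b M, hab, hmod]

lemma setOf_digit_eq_inter_Ico_subset {M I J : ℕ} [NeZero M] (hIJ : I ≤ J) :
    {v | digit M I v = digit M J v} ∩ Ico 0 1 ⊆
      ⋃ t ∈ {t ∈ Finset.range (M ^ J) | t / M ^ (J - I) % M = t % M},
        Ico ((t : ℝ) / M ^ J) ((t + 1) / M ^ J) := by
  have hMJ : (0 : ℝ) < (M : ℝ) ^ J := pow_pos (Nat.cast_pos.2 (NeZero.pos M)) J
  rintro v ⟨hv, hv0, hv1⟩
  refine mem_biUnion (x := ⌊v * M ^ J⌋₊) ?_ ⟨?_, ?_⟩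
  · simp only [Finset.coe_filter, Finset.mem_range, mem_ofPred_eq]
    refine ⟨(Nat.floor_lt (by positivity)).2 ?_,
      floor_mul_pow_eq_div (NeZero.ne M) hIJ v ▸ Fin.val_eq_of_eq hv⟩
    push_cast
    nlinarith
  · rw [div_le_iff₀ hMJ]
    exact Nat.floor_le (by positivity)
  · rw [lt_div_iff₀ hMJ]
    exact Nat.lt_floor_add_one _

lemma volume_digit_eq_digit_le {M I J : ℕ} [NeZero M] (hIJ : I ≠ J) :
    volume ({v | digit M I v = digit M J v} ∩ Icc 0 1) ≤ (M : ℝ≥0∞)⁻¹ := by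
  wlog hlt : I < J generalizing I J
  · simpa only [eq_comm] using this hIJ.symm (hIJ.lt_or_gt.resolve_left hlt)
  obtain ⟨L, rfl⟩ : ∃ L, J = L + 1 := ⟨J - 1, by omega⟩
  have hM := NeZero.pos M
  have hIco (t : ℕ) :
      volume (Ico ((t : ℝ) / M ^ (L + 1)) ((t + 1) / M ^ (L + 1))) = ((M : ℝ≥0∞) ^ (L + 1))⁻¹ := by
    rw [Real.volume_Ico, ← sub_div, add_sub_cancel_left, one_div,
      ENNReal.ofReal_inv_of_pos (by positivity), ENNReal.ofReal_pow (Nat.cast_nonneg _),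
      ENNReal.ofReal_natCast]
  have hM' : (M : ℝ≥0∞) ^ L ≠ 0 := pow_ne_zero _ (by exact_mod_cast hM.ne')
  calc volume ({v | digit M I v = digit M (L + 1) v} ∩ Icc 0 1)
      = volume ({v | digit M I v = digit M (L + 1) v} ∩ Ico 0 1) :=
        measure_congr ((ae_eq_refl _).inter Ico_ae_eq_Icc).symm
    _ ≤ ∑ t ∈ {t ∈ Finset.range (M ^ (L + 1)) | t / M ^ (L + 1 - I) % M = t % M},
          ((M : ℝ≥0∞) ^ (L + 1))⁻¹ :=
        (measure_mono (setOf_digit_eq_inter_Ico_subset hlt.le)).trans <|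
          (measure_biUnion_finset_le _ _).trans_eq (Finset.sum_congr rfl fun t _ => hIco t)
    _ ≤ M ^ L * ((M : ℝ≥0∞) ^ (L + 1))⁻¹ := by
        rw [Finset.sum_const, nsmul_eq_mul]
        gcongr
        exact_mod_cast (card_filter_digit_eq_le hM hlt).trans_eq (by rw [Nat.add_sub_cancel])
    _ = (M : ℝ≥0∞)⁻¹ := by
        rw [pow_succ, ENNReal.mul_inv (.inl hM') (.inl (by simp)), ← mul_assoc,
          ENNReal.mul_inv_cancel hM' (by simp), one_mul]

section Hashing

variable {α : Type*} [MeasurableSpace α] [StandardBorelSpace α] (M : ℕ) [NeZero M]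

theorem exists_hash_of_nullSingletonClass (μ : Measure α) [IsProbabilityMeasure μ]
    [NullSingletonClass μ] :
    ∃ T : ℕ → α → Fin M, (∀ i, Measurable (T i)) ∧
      ∀ i j, i ≠ j → μ {x | T i x = T j x} ≤ (M : ℝ≥0∞)⁻¹ := by
  have hf := measurableEmbedding_embeddingReal α
  set ν := μ.map (embeddingReal α)
  have : IsProbabilityMeasure ν := Measure.isProbabilityMeasure_map hf.measurable.aemeasurable
  have : NullSingletonClass ν := ⟨fun x => by
    rw [hf.map_apply]
    exact (subsingleton_singleton.preimage hf.injective).measure_zero μ⟩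
  have hU : Measurable (cdf ν ∘ embeddingReal α) := (monotone_cdf ν).measurable.comp hf.measurable
  refine ⟨fun i => digit M i ∘ cdf ν ∘ embeddingReal α, fun i => (measurable_digit M i).comp hU,
    fun i j hij => ?_⟩
  have hC : MeasurableSet {v | digit M i v = digit M j v} :=
    measurableSet_eq_fun (measurable_digit M i) (measurable_digit M j)
  calc μ {x | digit M i (cdf ν (embeddingReal α x)) = digit M j (cdf ν (embeddingReal α x))}
      = (ν.map (cdf ν)) {v | digit M i v = digit M j v} := by
        rw [Measure.map_map (monotone_cdf ν).measurable hf.measurable, Measure.map_apply hU hC]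
        rfl
    _ ≤ (M : ℝ≥0∞)⁻¹ := by
        rw [map_cdf_of_nullSingletonClass, Measure.restrict_apply hC]
        exact volume_digit_eq_digit_le hij

theorem exists_hash (μ : Measure α) [IsProbabilityMeasure μ] {A : Set α} (hA : MeasurableSet A)
    (hatoms : ∀ x ∉ A, μ {x} = 0) :
    ∃ T : ℕ → α → Fin M, (∀ i, Measurable (T i)) ∧
      ∀ i j, i ≠ j → μ {x | T i x = T j x} ≤ μ A + (M : ℝ≥0∞)⁻¹ := by
  by_cases h0 : μ Aᶜ = 0
  · refine ⟨fun _ _ => 0, fun _ => measurable_const, fun i j _ => ?_⟩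
    calc _ ≤ μ univ := measure_mono (subset_univ _)
      _ ≤ μ A + μ Aᶜ := measure_univ_le_add_compl A
      _ ≤ μ A + (M : ℝ≥0∞)⁻¹ := by rw [h0, add_zero]; exact le_self_add
  have := cond_isProbabilityMeasure (μ := μ) h0
  have : NullSingletonClass μ[|Aᶜ] := ⟨fun x => by
    rw [cond_apply hA.compl]
    by_cases hx : x ∈ A
    · simp [hx]
    · simp [measure_mono_null inter_subset_right (hatoms x hx)]⟩
  obtain ⟨T, hT, hcoll⟩ := exists_hash_of_nullSingletonClass M μ[|Aᶜ]
  refine ⟨T, hT, fun i j hij => ?_⟩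
  set C := {x | T i x = T j x}
  calc μ C ≤ μ (C ∩ A) + μ (C \ A) := measure_le_inter_add_sdiff _ _ _
    _ ≤ μ A + μ[C|Aᶜ] * μ Aᶜ := by
        rw [cond_mul_eq_inter hA.compl, sdiff_eq, inter_comm C Aᶜ]
        gcongr
        exact inter_subset_right
    _ ≤ μ A + (M : ℝ≥0∞)⁻¹ * 1 := by gcongr; exacts [hcoll i j hij, prob_le_one]
    _ = μ A + (M : ℝ≥0∞)⁻¹ := by rw [mul_one]

theorem exists_hash_pi (μ : Measure α) [IsProbabilityMeasure μ] (k : ℕ) :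
    ∃ T : ℕ → (Fin k → α) → Fin M, (∀ i, Measurable (T i)) ∧ ∀ i j, i ≠ j →
      Measure.pi (fun _ => μ) {u | T i u = T j u} ≤ μ {x | 0 < μ {x}} ^ k + (M : ℝ≥0∞)⁻¹ := by
  set E := {x | 0 < μ {x}}
  have hE : MeasurableSet E :=
    (Measure.countable_meas_pos_of_disjoint_iUnion (fun x => measurableSet_singleton x)
      fun x y hxy => disjoint_singleton.2 hxy).measurableSet
  have hatoms (u : Fin k → α) (hu : u ∉ univ.pi fun _ => E) : Measure.pi (fun _ => μ) {u} = 0 := by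
    obtain ⟨t, -, ht⟩ := not_forall₂.1 hu
    rw [Measure.pi_singleton]
    exact Finset.prod_eq_zero (Finset.mem_univ t) (not_lt.1 ht |>.antisymm zero_le)
  obtain ⟨T, hT, hcoll⟩ := exists_hash M _ (MeasurableSet.univ_pi fun _ => hE) hatoms
  refine ⟨T, hT, fun i j hij => (hcoll i j hij).trans_eq ?_⟩
  simp [Measure.pi_pi]

end Hashing

lemma PosCapAvg.exists_mtCode {P : Measure ℝ} {Γ : ℝ} (hcap : PosCapAvg P Γ) {lam : ℝ}
    (hlam : 0 < lam) (M₀ : ℕ) :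
    ∃ m₀ : ℕ, ∀ m, m₀ ≤ m → ∃ M, 0 < M ∧ M₀ ≤ M ∧ ∃ g D, IsMTCodeAvg P m M lam Γ g D := by
  obtain ⟨R, hR, hcodes⟩ := hcap
  obtain ⟨n₀, hn₀⟩ := hcodes lam (R / 2) hlam (half_pos hR)
  refine ⟨max n₀ (⌈Real.logb 2 M₀ / (R / 2)⌉₊ + 1), fun m hm => ?_⟩
  obtain ⟨M, hM, hcode, hrate⟩ := hn₀ m (le_of_max_le_left hm)
  refine ⟨M, hM, ?_, hcode⟩
  rcases M₀.eq_zero_or_pos with rfl | hM₀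
  · exact zero_le
  have hm' := le_of_max_le_right hm
  have hlog : Real.logb 2 M₀ / (R / 2) ≤ m := Nat.ceil_le.1 (by omega)
  rw [sub_half, le_div_iff₀ (by exact_mod_cast (by omega : 0 < m))] at hrate
  rw [div_le_iff₀ (half_pos hR)] at hlog
  have : (M₀ : ℝ) ≤ M :=
    (Real.logb_le_logb one_lt_two (by positivity) (by positivity)).1 (by linarith)
  exact_mod_cast this

lemma ENNReal.inv_natCast_le_ofReal {ε : ℝ} (hε : 0 < ε) {M : ℕ} (hM : ⌈ε⁻¹⌉₊ ≤ M) :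
    (M : ℝ≥0∞)⁻¹ ≤ ENNReal.ofReal ε := by
  have hεM : ε⁻¹ ≤ M := (Nat.le_ceil _).trans (by exact_mod_cast hM)
  rw [← ENNReal.ofReal_natCast, ← ENNReal.ofReal_inv_of_pos ((inv_pos.2 hε).trans_le hεM)]
  exact ENNReal.ofReal_le_ofReal (inv_le_of_inv_le₀ hε hεM)

/-- **Theorem 1(1).** If the channel `W_P` with non-discrete additive white noise has
positive message transmission feedback capacity with average power constraint `Γ`, then
there is a blocklength `ns` such that for every `N ≥ 1` and every `n ≥ ns` there exists an
`(n, N, λ₁, λ₂)` deterministic identification feedback code for `W_P` with average power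
constraint `Γ` and `λ₁, λ₂ ≤ λ`. -/
theorem stmt0 (P : Measure ℝ) [IsProbabilityMeasure P]
    (hnd : P {x : ℝ | 0 < P {x}} < 1)
    (lam Γ : ℝ) (hlam : lam ∈ Set.Ioo (0 : ℝ) (1 / 2)) (hΓ : 0 < Γ)
    (hcap : PosCapAvg P Γ) :
    ∃ ns : ℕ, ∀ N : ℕ, 0 < N → ∀ n : ℕ, ns ≤ n →
      ∃ lam₁ lam₂ : ℝ, 0 ≤ lam₁ ∧ 0 ≤ lam₂ ∧ lam₁ ≤ lam ∧ lam₂ ≤ lam ∧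
        ∃ (f : Fin N → FeedbackFn n) (D : Fin N → Set (Fin n → ℝ)),
          IsIDCodeAvg P n N lam₁ lam₂ Γ f D := by
  obtain ⟨hlam0, -⟩ := hlam
  have hlam4 : 0 < lam / 4 := by linarith
  obtain ⟨k, hk⟩ := ((ENNReal.tendsto_pow_atTop_nhds_zero_of_lt_one hnd).eventually
    (gt_mem_nhds (ENNReal.ofReal_pos.2 hlam4))).exists
  obtain ⟨m₀, hm₀⟩ := hcap.exists_mtCode (half_pos hlam0) ⌈(lam / 4)⁻¹⌉₊
  refine ⟨k + m₀, fun N _ n hn => ?_⟩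
  obtain ⟨m, rfl⟩ : ∃ m, n = k + m := ⟨n - k, by omega⟩
  obtain ⟨M, hM, hM₀, g, D, hcode⟩ := hm₀ m (by omega)
  have : NeZero M := ⟨hM.ne'⟩
  obtain ⟨T, hT, hcoll⟩ := exists_hash_pi M P k
  refine ⟨lam / 2, lam / 2 + lam / 2, by linarith, by linarith, by linarith, by linarith, _, _,
    hcode.isIDCodeAvg_seeded hΓ.le (half_pos hlam0).le (half_pos hlam0).le
      (T := fun i : Fin N => T i) (fun i => hT i) fun i j hij => ?_⟩
  calc _ ≤ P {x | 0 < P {x}} ^ k + (M : ℝ≥0∞)⁻¹ := hcoll i j (Fin.val_ne_of_ne hij)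
    _ ≤ ENNReal.ofReal (lam / 4) + ENNReal.ofReal (lam / 4) :=
        add_le_add hk.le (ENNReal.inv_natCast_le_ofReal hlam4 hM₀)
    _ = ENNReal.ofReal (lam / 2) := by rw [← ENNReal.ofReal_add hlam4.le hlam4.le]; ring_nf

end
end

section
/- Let P be a non-discrete probability measure on ℝ with atom set Ē = {x ∈ ℝ : P({x}) > 0}, let 0 < η < 1 and let L be a positive integer. Then for all sufficiently large n (specifically, for every n with P(Ē)^n ≤ η) there exists a measurable mapping π : ℝⁿ → {1,…,L} ∪ {∞} such that, when (Z₁,…,Zₙ) is distributed according to the n-fold product measure P^⊗n: (i) P^⊗n[π(Z₁,…,Zₙ) = l | π(Z₁,…,Zₙ) ≠ ∞] = 1/L for every l ∈ {1,…,L}, and (ii) P^⊗n[π(Z₁,…,Zₙ) = ∞] ≤ η. -/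
/-
Let `A ⊆ ℝⁿ` be the set of points all of whose coordinates are atoms of `P`. Its mass is
`P(Ē)^n ≤ η`, and `π` sends it to `∞`. Every point outside `A` has a coordinate that is not an
atom, so `P^⊗n` conditioned on `Aᶜ` has no atoms. An atomless probability measure on a standard
Borel space splits into `L` measurable pieces of mass `1/L`: transport it to `ℝ` by a Borel
embedding, where its distribution function is continuous, and cut off one quantile at a time.
-/

open MeasureTheory ProbabilityTheory
open scoped ENNReal
open Set Filter Topology

lemma continuous_measureReal_Iic (ν : Measure ℝ) [IsFiniteMeasure ν] [NullSingletonClass ν] :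
    Continuous fun x => ν.real (Iic x) := by
  refine continuous_iff_continuousAt.2 fun b => ?_
  have hIcc : Tendsto (fun x => ν.real (Icc (b - |x - b|) (b + |x - b|))) (𝓝 b) (𝓝 0) := by
    have hδ : Tendsto (fun x => |x - b|) (𝓝 b) (𝓝 0) := by
      simpa using ((continuous_sub_right b).abs.tendsto b)
    exact (ENNReal.tendsto_toReal ENNReal.zero_ne_top).comp ((tendsto_measure_Icc ν b).comp hδ)
  refine tendsto_iff_dist_tendsto_zero.2 (squeeze_zero (fun _ => dist_nonneg) (fun x => ?_) hIcc)
  rw [Real.dist_eq]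
  rcases le_total b x with hbx | hxb
  · rw [abs_of_nonneg (sub_nonneg.2 (measureReal_mono (Iic_subset_Iic.2 hbx))),
      ← measureReal_sdiff (Iic_subset_Iic.2 hbx) measurableSet_Iic]
    refine measureReal_mono fun y ⟨hyx, hyb⟩ => ?_
    have hyx : y ≤ x := hyx
    have hyb : b < y := not_le.1 hyb
    exact ⟨by linarith [abs_nonneg (x - b)], by linarith [hyx, le_abs_self (x - b)]⟩
  · rw [abs_of_nonpos (sub_nonpos.2 (measureReal_mono (Iic_subset_Iic.2 hxb))), neg_sub,
      ← measureReal_sdiff (Iic_subset_Iic.2 hxb) measurableSet_Iic]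
    refine measureReal_mono fun y ⟨hyb, hyx⟩ => ?_
    have hyb : y ≤ b := hyb
    have hyx : x < y := not_le.1 hyx
    exact ⟨by linarith [neg_abs_le (x - b)], by linarith [abs_nonneg (x - b)]⟩

lemma exists_measure_Iic_eq (ν : Measure ℝ) [IsFiniteMeasure ν] [NullSingletonClass ν]
    {c : ℝ≥0∞} (hc₀ : 0 < c) (hc : c < ν univ) : ∃ t, ν (Iic t) = c := by
  have hcont : Continuous fun x => ν (Iic x) :=
    (ENNReal.continuous_ofReal.comp (continuous_measureReal_Iic ν)).congr
      fun x => ofReal_measureReal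
  have hbot : Tendsto (fun x => ν (Iic x)) atBot (𝓝 0) := by
    have h := tendsto_measure_iInter_atBot (μ := ν) (fun x => measurableSet_Iic.nullMeasurableSet)
      (fun _ _ => Iic_subset_Iic.2) ⟨0, measure_ne_top ν (Iic 0)⟩
    rwa [iInter_Iic_eq_empty_iff.2 (by rw [range_id']; exact not_bddBelow_univ),
      measure_empty] at h
  exact mem_range_of_exists_le_of_exists_ge hcont
    ((hbot.eventually (eventually_le_nhds hc₀)).exists)
    ((tendsto_measure_Iic_atTop ν).eventually (eventually_ge_nhds hc)).exists

lemma nullSingletonClass_cond {α : Type*} [MeasurableSpace α] [MeasurableSingletonClass α]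
    {μ : Measure α} {s : Set α} (h : ∀ x ∈ s, μ {x} = 0) : NullSingletonClass μ[|s] := by
  refine ⟨fun x => ?_⟩
  rw [cond_apply' (measurableSet_singleton x)]
  by_cases hx : x ∈ s
  · rw [measure_mono_null inter_subset_right (h x hx), mul_zero]
  · rw [inter_singleton_eq_empty.2 hx, measure_empty, mul_zero]

lemma ENNReal.one_sub_inv_natCast_add_one (L : ℕ) :
    1 - ((L : ℝ≥0∞) + 1)⁻¹ = L * ((L : ℝ≥0∞) + 1)⁻¹ := by
  refine ENNReal.sub_eq_of_eq_add (by simp) ?_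
  rw [← add_one_mul, ENNReal.mul_inv_cancel (by simp) (by simp)]

theorem exists_measurable_equipartition_real (ν : Measure ℝ) [IsProbabilityMeasure ν]
    [NullSingletonClass ν] {L : ℕ} (hL : 0 < L) :
    ∃ φ : ℝ → ℕ, Measurable φ ∧ (∀ y, φ y ∈ Icc 1 L) ∧
      ∀ l ∈ Icc 1 L, ν {y | φ y = l} = (L : ℝ≥0∞)⁻¹ := by
  induction L, hL using Nat.le_induction generalizing ν with
  | base =>
    refine ⟨fun _ => 1, measurable_const, fun _ => ⟨le_rfl, le_rfl⟩, fun l hl => ?_⟩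
    obtain rfl : l = 1 := le_antisymm hl.2 hl.1
    simp
  | succ L hL ih =>
    obtain ⟨t, ht⟩ : ∃ t, ν (Iic t) = ((L : ℝ≥0∞) + 1)⁻¹ :=
      exists_measure_Iic_eq ν (by simp) (by
        rw [measure_univ, ENNReal.inv_lt_one]
        exact_mod_cast Nat.lt_add_of_pos_left hL)
    have hIoi : ν (Ioi t) = L * ((L : ℝ≥0∞) + 1)⁻¹ := by
      rw [← compl_Iic, prob_compl_eq_one_sub measurableSet_Iic, ht,
        ENNReal.one_sub_inv_natCast_add_one]
    have : IsProbabilityMeasure ν[|Ioi t] := cond_isProbabilityMeasure (by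
      rw [hIoi]; exact mul_ne_zero (Nat.cast_ne_zero.2 (by omega)) (by simp))
    have : NullSingletonClass ν[|Ioi t] := nullSingletonClass_cond fun x _ => measure_singleton x
    obtain ⟨φ, hφm, hφL, hφ⟩ := ih ν[|Ioi t]
    refine ⟨fun y => if y ≤ t then 1 else φ y + 1,
      Measurable.ite measurableSet_Iic measurable_const (hφm.add_const 1), fun y => ?_, ?_⟩
    · have := hφL y
      simp only [mem_Icc] at this ⊢
      split_ifs <;> omega
    rintro (_ | _ | k) ⟨hk1, hk2⟩
    · omega
    · have : {y | (if y ≤ t then 1 else φ y + 1) = 0 + 1} = Iic t := by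
        ext y
        by_cases hy : y ≤ t
        · simp [hy]
        · simp [hy, Nat.one_le_iff_ne_zero.1 (hφL y).1]
      rw [this, ht, Nat.cast_add_one]
    · have : {y | (if y ≤ t then 1 else φ y + 1) = k + 1 + 1} = Ioi t ∩ {y | φ y = k + 1} := by
        ext y
        by_cases hy : y ≤ t
        · simp [hy]
        · simp [hy, lt_of_not_ge hy]
      rw [this, ← cond_mul_eq_inter measurableSet_Ioi, hφ (k + 1) ⟨by omega, by omega⟩, hIoi,
        ENNReal.inv_mul_cancel_left (Nat.cast_ne_zero.2 (by omega)) (by simp), Nat.cast_add_one]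

lemma MeasurableEmbedding.nullSingletonClass_map {α β : Type*} [MeasurableSpace α]
    [MeasurableSpace β] {μ : Measure α} [NullSingletonClass μ] {f : α → β}
    (hf : MeasurableEmbedding f) : NullSingletonClass (μ.map f) :=
  ⟨fun y => by rw [hf.map_apply]; exact (subsingleton_singleton.preimage hf.injective).measure_zero μ⟩

theorem exists_measurable_equipartition {Ω : Type*} [MeasurableSpace Ω] [StandardBorelSpace Ω]
    (ν : Measure Ω) [IsProbabilityMeasure ν] [NullSingletonClass ν] {L : ℕ} (hL : 0 < L) :
    ∃ φ : Ω → ℕ, Measurable φ ∧ (∀ x, φ x ∈ Icc 1 L) ∧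
      ∀ l ∈ Icc 1 L, ν {x | φ x = l} = (L : ℝ≥0∞)⁻¹ := by
  have hf := measurableEmbedding_embeddingReal Ω
  have := Measure.isProbabilityMeasure_map (μ := ν) hf.measurable.aemeasurable
  have := hf.nullSingletonClass_map (μ := ν)
  obtain ⟨φ, hφm, hφL, hφ⟩ := exists_measurable_equipartition_real (ν.map (embeddingReal Ω)) hL
  refine ⟨φ ∘ embeddingReal Ω, hφm.comp hf.measurable, fun x => hφL _, fun l hl => ?_⟩
  rw [← hφ l hl, hf.map_apply]
  rfl

lemma countable_setOf_measure_singleton_pos {α : Type*} [MeasurableSpace α]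
    [MeasurableSingletonClass α] (μ : Measure α) [SFinite μ] :
    {x | 0 < μ {x}}.Countable := by
  simpa using Measure.countable_meas_level_set_pos (μ := μ) measurable_id

lemma nullSingletonClass_cond_compl_pi_atoms {ι α : Type*} [Fintype ι] [MeasurableSpace α]
    [MeasurableSingletonClass α] (μ : Measure α) [SigmaFinite μ] :
    NullSingletonClass (Measure.pi fun _ : ι => μ)[|(univ.pi fun _ => {x | 0 < μ {x}})ᶜ] :=
  nullSingletonClass_cond fun z hz => by
    obtain ⟨i, hi⟩ : ∃ i, ¬0 < μ {z i} := by simpa using hz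
    rw [Measure.pi_singleton]
    exact Finset.prod_eq_zero (Finset.mem_univ i) (nonpos_iff_eq_zero.1 (not_lt.1 hi))

/-- The value `0` of `π` encodes `∞`. -/
theorem stmt6_general (P : Measure ℝ) [IsProbabilityMeasure P]
    (Ebar : Set ℝ) (hEbar : Ebar = {x : ℝ | 0 < P {x}})
    (η : ℝ) (hη : η ∈ Set.Ioo (0 : ℝ) 1)
    (L : ℕ) (hL : 0 < L) :
    ∀ n : ℕ, 0 < n → P Ebar ^ n ≤ ENNReal.ofReal η →
      ∃ π : (Fin n → ℝ) → ℕ,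
        Measurable π ∧ (∀ z, π z ≤ L) ∧
        (∀ l : ℕ, 1 ≤ l → l ≤ L →
          ((Measure.pi fun _ : Fin n => P)[|{z | π z ≠ 0}]) {z | π z = l}
            = 1 / (L : ℝ≥0∞)) ∧
        (Measure.pi fun _ : Fin n => P) {z | π z = 0} ≤ ENNReal.ofReal η := by
  intro n _ hPn
  subst hEbar
  set μ := Measure.pi fun _ : Fin n => P
  set A := univ.pi fun _ : Fin n => {x | 0 < P {x}}
  have hA : MeasurableSet A :=
    .univ_pi fun _ => (countable_setOf_measure_singleton_pos P).measurableSet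
  have hμA : μ A = P {x | 0 < P {x}} ^ n := by simp [μ, A, Measure.pi_pi]
  have : IsProbabilityMeasure μ[|Aᶜ] := cond_isProbabilityMeasure <| by
    rw [prob_compl_eq_one_sub hA, hμA]
    exact (tsub_pos_of_lt (hPn.trans_lt (ENNReal.ofReal_lt_one.2 hη.2))).ne'
  have : NullSingletonClass μ[|Aᶜ] := nullSingletonClass_cond_compl_pi_atoms P
  obtain ⟨φ, hφm, hφL, hφ⟩ := exists_measurable_equipartition μ[|Aᶜ] hL
  have hφ₀ (z) : φ z ≠ 0 := Nat.one_le_iff_ne_zero.1 (hφL z).1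
  have hπ_ne : {z | Aᶜ.indicator φ z ≠ 0} = Aᶜ := by
    ext z
    by_cases hz : z ∈ A <;> simp [hz, hφ₀]
  refine ⟨Aᶜ.indicator φ, hφm.indicator hA.compl, fun z => ?_, fun l hl₁ hl₂ => ?_, ?_⟩
  · by_cases hz : z ∈ A <;> simp [hz, (hφL z).2]
  · have : {z | Aᶜ.indicator φ z = l} = Aᶜ ∩ {z | φ z = l} := by
      ext z
      by_cases hz : z ∈ A <;> simp [hz]
      omega
    rw [hπ_ne, this, cond_inter_self hA.compl, hφ l ⟨hl₁, hl₂⟩, one_div]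
  · have : {z | Aᶜ.indicator φ z = 0} = A := by
      ext z
      by_cases hz : z ∈ A <;> simp [hz, hφ₀]
    rwa [this, hμA]

/-- **Common randomness generation (Lemma 4).** Let `P` be a non-discrete probability
measure on `ℝ` with atom set `Ē`, `0 < η < 1` and `L ≥ 1`. For every `n` with
`P(Ē)^n ≤ η` there is a measurable map `π : ℝⁿ → {1,…,L} ∪ {∞}` (here `∞` is encoded
as `0`) such that conditionally on `π ≠ ∞` the value of `π` is uniform on `{1,…,L}`,
and `π = ∞` has probability at most `η` under the product measure `P^⊗n`. -/
theorem stmt6 (P : Measure ℝ) [IsProbabilityMeasure P]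
    (Ebar : Set ℝ) (hEbar : Ebar = {x : ℝ | 0 < P {x}})
    (hnd : P Ebar < 1)
    (η : ℝ) (hη : η ∈ Set.Ioo (0 : ℝ) 1)
    (L : ℕ) (hL : 0 < L) :
    ∀ n : ℕ, 0 < n → P Ebar ^ n ≤ ENNReal.ofReal η →
      ∃ π : (Fin n → ℝ) → ℕ,
        Measurable π ∧ (∀ z, π z ≤ L) ∧
        (∀ l : ℕ, 1 ≤ l → l ≤ L →
          ((Measure.pi fun _ : Fin n => P)[|{z | π z ≠ 0}]) {z | π z = l}
            = 1 / (L : ℝ≥0∞)) ∧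
        (Measure.pi fun _ : Fin n => P) {z | π z = 0} ≤ ENNReal.ofReal η :=
  stmt6_general P Ebar hEbar η hη L hL
end

section
/- Let M, L and N be positive integers, let λ ∈ (0, 1/2) satisfy M > 2/λ, and set c = λ/2 − 1/M > 0. If λLc²/(2 ln 2) > log₂ N, then there exists a family of N functions k₁,…,k_N : {1,…,L} → {1,…,M} such that |{l ∈ {1,…,L} : k_i(l) = k_j(l)}| ≤ λL/2 for every pair (i, j) of distinct indices in {1,…,N}. -/
/-!
Call `g` bad for `f` if the two agree in more than `t = ⌊λL/2⌋` places. Weighting each `g` by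
`r ^ #{l | f l = g l}` gives total weight `(r - 1 + M) ^ L`, one factor per coordinate, so by
Markov's inequality at most `(r - 1 + M) ^ L / r ^ (t + 1)` functions are bad for `f`. With
`r = 1 + c/λ`, the elementary bounds `1 + x ≤ eˣ` and `1 - r⁻¹ ≤ log r` show that `N` times this
is less than `M ^ L`, so the functions can be chosen greedily, each one avoiding the bad sets of
its predecessors.
-/

open Finset Function Real

section Agreement

variable {ι α : Type*} [Fintype ι] [DecidableEq ι] [Fintype α] [DecidableEq α]

theorem sum_pow_card_agree {R : Type*} [CommRing R] (f : ι → α) (r : R) :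
    ∑ g : ι → α, r ^ #{i | f i = g i} = (r - 1 + Fintype.card α) ^ Fintype.card ι := by
  have hcoord (a : α) : ∑ b : α, (if a = b then r else 1) = r - 1 + Fintype.card α := by
    rw [Finset.sum_ite, filter_eq, if_pos (mem_univ a), sum_singleton, sum_const, nsmul_one,
      filter_ne, card_erase_of_mem (mem_univ a), card_univ,
      Nat.cast_pred (Fintype.card_pos_iff.mpr ⟨a⟩)]
    ring
  calc ∑ g : ι → α, r ^ #{i | f i = g i}
      = ∑ g : ι → α, ∏ i, if f i = g i then r else 1 := by
        simp only [prod_ite, prod_const, one_pow, mul_one]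
    _ = ∏ i, ∑ b, if f i = b then r else 1 :=
        (Fintype.prod_sum fun i (b : α) => if f i = b then r else 1).symm
    _ = (r - 1 + Fintype.card α) ^ Fintype.card ι := by
        simp only [hcoord, prod_const, card_univ]

theorem card_le_card_agree_mul_pow_le {R : Type*} [CommRing R] [PartialOrder R]
    [IsOrderedRing R] (f : ι → α) (u : ℕ) {r : R} (hr : 1 ≤ r) :
    (#{g : ι → α | u ≤ #{i | f i = g i}} : R) * r ^ u
      ≤ (r - 1 + Fintype.card α) ^ Fintype.card ι := by
  rw [← sum_pow_card_agree f r, ← nsmul_eq_mul]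
  calc #{g : ι → α | u ≤ #{i | f i = g i}} • r ^ u
      ≤ ∑ g ∈ {g : ι → α | u ≤ #{i | f i = g i}}, r ^ #{i | f i = g i} :=
        card_nsmul_le_sum _ _ _ fun g hg => pow_le_pow_right₀ hr (mem_filter.mp hg).2
    _ ≤ ∑ g : ι → α, r ^ #{i | f i = g i} :=
        sum_le_sum_of_subset_of_nonneg (subset_univ _) fun _ _ _ =>
          pow_nonneg (zero_le_one.trans hr) _

end Agreement

section Greedy

variable {F : Type*} {G : F → F → Prop}

theorem pairwise_onFun_cons (hG : ∀ f g, G f g → G g f) {n : ℕ} {k : Fin n → F}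
    (hk : Pairwise (G on k)) {g : F} (hg : ∀ i, G (k i) g) :
    Pairwise (G on (Fin.cons g k : Fin (n + 1) → F)) := by
  intro i j hij
  cases i using Fin.cases <;> cases j using Fin.cases
  · exact absurd rfl hij
  · exact hG _ _ (hg _)
  · exact hg _
  · exact hk (ne_of_apply_ne Fin.succ hij)

variable [Fintype F] [DecidableRel G]

theorem exists_forall_rel_of_mul_card_lt [Nonempty F] {N n : ℕ}
    (h : ∀ f, N * #{g | ¬ G f g} < Fintype.card F) (hn : n < N) (k : Fin n → F) :
    ∃ g, ∀ i, G (k i) g := by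
  classical
  by_contra! hbad
  have hcover : Fintype.card F ≤ ∑ i, #{g | ¬ G (k i) g} :=
    calc Fintype.card F = #(univ : Finset F) := card_univ.symm
      _ ≤ #(univ.biUnion fun i => {g | ¬ G (k i) g}) :=
          card_le_card fun g _ => by simpa using hbad g
      _ ≤ ∑ i, #{g | ¬ G (k i) g} := card_biUnion_le
  have hmul : N * Fintype.card F ≤ n * (Fintype.card F - 1) :=
    calc N * Fintype.card F ≤ ∑ i, N * #{g | ¬ G (k i) g} := by
          rw [← mul_sum]; exact Nat.mul_le_mul_left N hcover
      _ ≤ ∑ _i : Fin n, (Fintype.card F - 1) :=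
          sum_le_sum fun i _ => Nat.le_pred_of_lt (h (k i))
      _ = n * (Fintype.card F - 1) := by simp
  obtain ⟨p, hp⟩ := Nat.exists_eq_add_one.mpr (Fintype.card_pos (α := F))
  rw [hp, Nat.add_sub_cancel] at hmul
  nlinarith [Nat.mul_le_mul_right p hn.le]

theorem exists_pairwise_of_mul_card_lt [Nonempty F] (hG : ∀ f g, G f g → G g f) {N : ℕ}
    (h : ∀ f, N * #{g | ¬ G f g} < Fintype.card F) : ∃ k : Fin N → F, Pairwise (G on k) := by
  suffices ∀ n ≤ N, ∃ k : Fin n → F, Pairwise (G on k) from this N le_rfl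
  intro n hn
  induction n with
  | zero => exact ⟨Fin.elim0, fun i => i.elim0⟩
  | succ n ih =>
    obtain ⟨k, hk⟩ := ih (by omega)
    obtain ⟨g, hg⟩ := exists_forall_rel_of_mul_card_lt h hn k
    exact ⟨Fin.cons g k, pairwise_onFun_cons hG hk hg⟩

end Greedy

section Estimates

variable {lam c : ℝ}

theorem mul_sq_div_two_add_le (hlam0 : 0 < lam) (hlam1 : lam ≤ 1) (hc : 0 < c) :
    lam * c ^ 2 / 2 + c / lam * (lam / 2 - c) ≤ lam / 2 * (1 - (1 + c / lam)⁻¹) := by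
  have hlc : 0 < lam + c := by linarith
  have hlam2 : lam ^ 2 ≤ 1 := pow_le_one₀ hlam0.le hlam1
  rw [one_add_div hlam0.ne', inv_div, one_sub_div hlc.ne']
  field_simp
  nlinarith [mul_nonneg (mul_nonneg (sq_nonneg c) hlam0.le) (sub_nonneg.mpr hlam2),
    mul_nonneg (pow_pos hc 3).le (sub_nonneg.mpr (hlam2.trans one_le_two))]

theorem mul_add_pow_lt_one_add_pow_mul_pow {M L N u : ℕ} (hM : 0 < M) (hlam0 : 0 < lam)
    (hlam1 : lam ≤ 1) (hc : c = lam / 2 - 1 / M) (hcpos : 0 < c)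
    (hN : (N : ℝ) < exp (lam * L * c ^ 2 / 2)) (hu : lam * L / 2 ≤ u) :
    (N : ℝ) * (c / lam + M) ^ L < (1 + c / lam) ^ u * (M : ℝ) ^ L := by
  set y := c / lam
  have hMpos : (0 : ℝ) < M := Nat.cast_pos.mpr hM
  have hy0 : 0 < y := div_pos hcpos hlam0
  have hgain : 0 ≤ 1 - (1 + y)⁻¹ := sub_nonneg.mpr (inv_le_one_of_one_le₀ (by linarith))
  have hexponent : lam * L * c ^ 2 / 2 + L * (y / M) ≤ u * (1 - (1 + y)⁻¹) :=
    calc lam * L * c ^ 2 / 2 + L * (y / M)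
        = L * (lam * c ^ 2 / 2 + y * (lam / 2 - c)) := by rw [hc]; ring
      _ ≤ L * (lam / 2 * (1 - (1 + y)⁻¹)) :=
          mul_le_mul_of_nonneg_left (mul_sq_div_two_add_le hlam0 hlam1 hcpos) (Nat.cast_nonneg L)
      _ = lam * L / 2 * (1 - (1 + y)⁻¹) := by ring
      _ ≤ u * (1 - (1 + y)⁻¹) := mul_le_mul_of_nonneg_right hu hgain
  calc (N : ℝ) * (y + M) ^ L = N * (y / M + 1) ^ L * (M : ℝ) ^ L := by
        rw [mul_assoc, ← mul_pow, div_add_one hMpos.ne', div_mul_cancel₀ _ hMpos.ne']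
    _ ≤ N * exp (y / M) ^ L * (M : ℝ) ^ L := by
        gcongr
        exact add_one_le_exp _
    _ < exp (lam * L * c ^ 2 / 2) * exp (y / M) ^ L * (M : ℝ) ^ L := by gcongr
    _ = exp (lam * L * c ^ 2 / 2 + L * (y / M)) * (M : ℝ) ^ L := by
        rw [← exp_nat_mul, ← exp_add]
    _ ≤ exp (u * (1 - (1 + y)⁻¹)) * (M : ℝ) ^ L := by gcongr
    _ = exp (1 - (1 + y)⁻¹) ^ u * (M : ℝ) ^ L := by rw [← exp_nat_mul]
    _ ≤ (1 + y) ^ u * (M : ℝ) ^ L := by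
        gcongr
        exact (le_log_iff_exp_le (by linarith)).mp (one_sub_inv_le_log_of_pos (by linarith))

theorem mul_card_agree_ge_lt {ι α : Type*} [Fintype ι] [DecidableEq ι] [Fintype α]
    [DecidableEq α] [Nonempty α] {N u : ℕ} (hlam0 : 0 < lam) (hlam1 : lam ≤ 1)
    (hc : c = lam / 2 - 1 / Fintype.card α) (hcpos : 0 < c)
    (hN : (N : ℝ) < exp (lam * Fintype.card ι * c ^ 2 / 2)) (hu : lam * Fintype.card ι / 2 ≤ u)
    (f : ι → α) :
    N * #{g : ι → α | u ≤ #{i | f i = g i}} < Fintype.card α ^ Fintype.card ι := by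
  have hr : 1 ≤ 1 + c / lam := le_add_of_nonneg_right (div_pos hcpos hlam0).le
  have hbad := card_le_card_agree_mul_pow_le f u hr
  rw [add_sub_cancel_left] at hbad
  have hreal : (N * #{g : ι → α | u ≤ #{i | f i = g i}} : ℝ)
      < (Fintype.card α : ℝ) ^ Fintype.card ι := by
    refine lt_of_mul_lt_mul_left ?_ (pow_nonneg (zero_le_one.trans hr) u)
    calc (1 + c / lam) ^ u * (N * #{g : ι → α | u ≤ #{i | f i = g i}})
        = N * (#{g : ι → α | u ≤ #{i | f i = g i}} * (1 + c / lam) ^ u) := by ring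
      _ ≤ N * (c / lam + Fintype.card α) ^ Fintype.card ι := by gcongr
      _ < _ := mul_add_pow_lt_one_add_pow_mul_pow Fintype.card_pos hlam0 hlam1 hc hcpos hN hu
  exact_mod_cast hreal

end Estimates

theorem stmt8_general (M L N : ℕ) (hM : 0 < M) (hN : 0 < N)
    (lam : ℝ) (hlam : lam ∈ Set.Ioo (0 : ℝ) (1 / 2))
    (c : ℝ) (hc : c = lam / 2 - 1 / M) (hcpos : 0 < c)
    (hLN : Real.logb 2 N < lam * L * c ^ 2 / (2 * Real.log 2)) :
    ∃ k : Fin N → Fin L → Fin M, ∀ i j : Fin N, i ≠ j →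
      (Nat.card {l : Fin L // k i l = k j l} : ℝ) ≤ lam * L / 2 := by
  set t := ⌊lam * L / 2⌋₊
  have : Nonempty (Fin M) := ⟨⟨0, hM⟩⟩
  have hNexp : (N : ℝ) < exp (lam * L * c ^ 2 / 2) := by
    rw [← log_lt_iff_lt_exp (Nat.cast_pos.mpr hN)]
    rw [logb, mul_comm 2, div_mul_eq_div_div_swap,
      div_lt_div_iff_of_pos_right (log_pos one_lt_two)] at hLN
    exact hLN
  have hcount (f : Fin L → Fin M) :
      N * #{g : Fin L → Fin M | ¬ #{l | f l = g l} ≤ t} < Fintype.card (Fin L → Fin M) := by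
    simp only [not_le, Nat.lt_iff_add_one_le, Fintype.card_fun]
    refine mul_card_agree_ge_lt hlam.1 (by linarith [hlam.2]) (by simpa using hc) hcpos
      (by simpa using hNexp) (by simpa using (Nat.lt_floor_add_one (lam * L / 2)).le) f
  obtain ⟨k, hk⟩ := exists_pairwise_of_mul_card_lt
    (G := fun f g : Fin L → Fin M => #{l | f l = g l} ≤ t)
    (fun f g h => by simpa only [eq_comm] using h) hcount
  refine ⟨k, fun i j hij => ?_⟩
  rw [Nat.card_eq_fintype_card, Fintype.card_subtype]
  exact (Nat.cast_le.mpr (hk hij)).trans (Nat.floor_le (by have := hlam.1; positivity))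

/-- **Lemma 7 (existence of a good family of coloring functions).** Let `M, L, N ≥ 1`,
`λ ∈ (0,1/2)` with `M > 2/λ`, and `c = λ/2 − 1/M > 0`. If `λLc²/(2 ln 2) > log₂ N`,
then there exist `N` functions `k₁,…,k_N : {1,…,L} → {1,…,M}` such that any two
distinct ones agree in at most `λL/2` points. -/
theorem stmt8 (M L N : ℕ) (hM : 0 < M) (hL : 0 < L) (hN : 0 < N)
    (lam : ℝ) (hlam : lam ∈ Set.Ioo (0 : ℝ) (1 / 2)) (hMlam : 2 / lam < M)
    (c : ℝ) (hc : c = lam / 2 - 1 / M) (hcpos : 0 < c)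
    (hLN : Real.logb 2 N < lam * L * c ^ 2 / (2 * Real.log 2)) :
    ∃ k : Fin N → Fin L → Fin M, ∀ i j : Fin N, i ≠ j →
      (Nat.card {l : Fin L // k i l = k j l} : ℝ) ≤ lam * L / 2 :=
  stmt8_general M L N hM hN lam hlam c hc hcpos hLN
end

section
/- Let M, L and N be positive integers, let λ ∈ (0, 1/2) satisfy M > 2/λ, and set c = λ/2 − 1/M > 0. Let (K₁,…,K_N) be an N-tuple of functions from {1,…,L} to {1,…,M} chosen according to the uniform probability measure on the set of all such N-tuples (equivalently, all NL values K_i(l) are i.i.d. uniform on {1,…,M}). Then the probability that there exist distinct indices i, j ∈ {1,…,N} with |{l ∈ {1,…,L} : K_i(l) = K_j(l)}| > λL/2 is at most N(N−1)·2^{−(L λ c²)/ln 2}. -/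
/-!
Union bound over the `N (N - 1)` ordered pairs `(i, j)`. For a fixed pair, `(K i, K j)` is a
uniform pair of words, so it suffices to bound the proportion of word pairs `(f, g)` agreeing in
more than `λL/2` places. The agreement count is a sum of `L` independent indicators of mean `1/M`,
so the exponential Markov inequality with parameter `t = 2c` gives the bound
`exp (-tλL/2) (1 + (e^t - 1)/M)^L ≤ exp (L ((e^{2c} - 1)/M - cλ))`; with `1/M = λ/2 - c` and
`e^{2c} - 1 ≤ 2c + 4c²` the exponent is at most `-Lλc²`.
-/

open Finset Real

theorem Real.rpow_div_log {x : ℝ} (hx : 0 < x) (hx1 : x ≠ 1) (y : ℝ) :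
    x ^ (y / log x) = exp y := by
  have : log x ≠ 0 := log_ne_zero_of_pos_of_ne_one hx hx1
  rw [rpow_def_of_pos hx, mul_div_cancel₀ _ this]

theorem Nat.card_subtype_comp_div {X A B : Type*} [Finite A] [Finite B] [Nonempty B]
    (e : X ≃ A × B) {f : X → A} (he : ∀ x, (e x).1 = f x) (P : A → Prop) :
    (Nat.card {x // P (f x)} : ℝ) / Nat.card X = Nat.card {a // P a} / Nat.card A := by
  have hB : (Nat.card B : ℝ) ≠ 0 := by exact_mod_cast Nat.card_pos.ne'
  rw [Nat.card_congr ((e.subtypeEquiv fun x => by rw [he]).trans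
      Equiv.prodSubtypeFstEquivSubtypeProd),
    Nat.card_congr e, Nat.card_prod, Nat.card_prod]
  push_cast
  exact mul_div_mul_right _ _ hB

theorem Nat.card_subtype_apply_apply_div {ι V : Type*} [DecidableEq ι] [Finite ι] [Finite V]
    [Nonempty V] {i j : ι} (hij : i ≠ j) (R : V → V → Prop) :
    (Nat.card {K : ι → V // R (K i) (K j)} : ℝ) / Nat.card (ι → V) =
      Nat.card {p : V × V // R p.1 p.2} / Nat.card (V × V) :=
  Nat.card_subtype_comp_div (f := fun K => (K i, K j)) (((Equiv.funSplitAt i V).trans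
    ((Equiv.refl V).prodCongr (Equiv.funSplitAt ⟨j, hij.symm⟩ V))).trans
      (Equiv.prodAssoc V V _).symm) (fun _ => rfl) fun p => R p.1 p.2

theorem Nat.card_exists_ne_le_sum_offDiag {ι α : Type*} [Fintype ι] [DecidableEq ι] [Fintype α]
    (P : ι → ι → α → Prop) :
    Nat.card {x // ∃ i j, i ≠ j ∧ P i j x} ≤ ∑ q ∈ univ.offDiag, Nat.card {x // P q.1 q.2 x} := by
  classical
  simp only [Nat.card_eq_fintype_card, Fintype.card_subtype]
  calc #{x | ∃ i j, i ≠ j ∧ P i j x}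
      ≤ #(univ.offDiag.biUnion fun q => ({x | P q.1 q.2 x} : Finset α)) := by
        refine card_le_card fun x hx => ?_
        obtain ⟨i, j, hij, h⟩ := (mem_filter.1 hx).2
        exact mem_biUnion.2 ⟨(i, j), by simpa using hij, by simpa using h⟩
    _ ≤ _ := card_biUnion_le

theorem Nat.card_exists_ne_div_le {ι V : Type*} [Fintype ι] [DecidableEq ι] [Fintype V]
    [Nonempty V] (R : V → V → Prop) :
    (Nat.card {K : ι → V // ∃ i j, i ≠ j ∧ R (K i) (K j)} : ℝ) / Nat.card (ι → V) ≤
      Fintype.card ι * (Fintype.card ι - 1) *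
        ((Nat.card {p : V × V // R p.1 p.2} : ℝ) / Nat.card (V × V)) := by
  calc _ ≤ ∑ q ∈ (univ : Finset ι).offDiag,
        (Nat.card {K : ι → V // R (K q.1) (K q.2)} : ℝ) / Nat.card (ι → V) := by
        rw [← sum_div]
        gcongr
        exact_mod_cast Nat.card_exists_ne_le_sum_offDiag fun i j (K : ι → V) => R (K i) (K j)
    _ = ∑ _q ∈ (univ : Finset ι).offDiag,
        (Nat.card {p : V × V // R p.1 p.2} : ℝ) / Nat.card (V × V) :=
        sum_congr rfl fun q hq => Nat.card_subtype_apply_apply_div (mem_offDiag.1 hq).2.2 R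
    _ = _ := by
        rw [sum_const, offDiag_card, nsmul_eq_mul, Finset.card_univ,
          Nat.cast_sub (Nat.le_mul_self _)]
        push_cast; ring

theorem exp_two_mul_sub_one_mul_le {lam c : ℝ} (hlam : lam < 1 / 2) (hc : 0 < c)
    (hcl : c < lam / 2) : (exp (2 * c) - 1) * (lam / 2 - c) ≤ lam * c - lam * c ^ 2 := by
  have hexp : exp (2 * c) - 1 ≤ 2 * c + (2 * c) ^ 2 := by
    have := abs_exp_sub_one_sub_id_le (x := 2 * c) (by rw [abs_of_pos (by positivity)]; linarith)
    linarith [le_abs_self (exp (2 * c) - 1 - 2 * c)]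
  nlinarith [mul_le_mul_of_nonneg_right hexp (by linarith : 0 ≤ lam / 2 - c)]

noncomputable def agreeCount {κ V : Type*} (f g : κ → V) : ℕ := Nat.card {l // f l = g l}

section Agreement

variable {κ V : Type*} [Fintype κ] [DecidableEq κ] [Fintype V]

theorem sum_pow_agreeCount {R : Type*} [CommRing R] (f : κ → V) (x : R) :
    ∑ g : κ → V, x ^ agreeCount f g = (x + (Fintype.card V - 1)) ^ Fintype.card κ := by
  classical
  have hpow : ∀ g : κ → V, x ^ agreeCount f g = ∏ l, if f l = g l then x else 1 := fun g => by
    rw [prod_ite, prod_const, prod_const_one, mul_one, agreeCount, Nat.card_eq_fintype_card,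
      Fintype.card_subtype]
  have hfiber : ∀ l, ∑ v : V, (if f l = v then x else 1) = x + (Fintype.card V - 1) := fun l => by
    rw [← add_sum_erase _ _ (mem_univ (f l)), if_pos rfl, sum_congr rfl fun v hv =>
      if_neg (ne_of_mem_erase hv).symm]
    have : Nonempty V := ⟨f l⟩
    simp [card_erase_of_mem, Nat.cast_sub Fintype.card_pos]
  simp_rw [hpow]
  rw [← Fintype.prod_sum fun l v => if f l = v then x else 1, prod_congr rfl fun l _ => hfiber l,
    prod_const, card_univ]

theorem natCard_agreeCount_gt_mul_exp_le (a t : ℝ) (ht : 0 ≤ t) :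
    (Nat.card {p : (κ → V) × (κ → V) // a < agreeCount p.1 p.2} : ℝ) * exp (t * a) ≤
      (Fintype.card V * (exp t + (Fintype.card V - 1))) ^ Fintype.card κ := by
  calc (Nat.card {p : (κ → V) × (κ → V) // a < agreeCount p.1 p.2} : ℝ) * exp (t * a)
      = ∑ p ∈ univ.filter fun p : (κ → V) × (κ → V) => a < agreeCount p.1 p.2, exp (t * a) := by
        rw [sum_const, nsmul_eq_mul, Nat.card_eq_fintype_card, Fintype.card_subtype]
    _ ≤ ∑ p ∈ univ.filter fun p : (κ → V) × (κ → V) => a < agreeCount p.1 p.2,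
          exp t ^ agreeCount p.1 p.2 := by
        refine sum_le_sum fun p hp => ?_
        rw [← exp_nat_mul, exp_le_exp, mul_comm (agreeCount p.1 p.2 : ℝ)]
        exact mul_le_mul_of_nonneg_left (mem_filter.1 hp).2.le ht
    _ ≤ ∑ p : (κ → V) × (κ → V), exp t ^ agreeCount p.1 p.2 :=
        sum_le_sum_of_subset_of_nonneg (filter_subset _ _) fun _ _ _ => by positivity
    _ = _ := by
        rw [Fintype.sum_prod_type]
        simp_rw [sum_pow_agreeCount]
        simp [mul_pow]

theorem natCard_agreeCount_gt_div_le [Nonempty V] {lam c : ℝ} (hlam : lam < 1 / 2)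
    (hc : c = lam / 2 - 1 / Fintype.card V) (hcpos : 0 < c) :
    (Nat.card {p : (κ → V) × (κ → V) // lam * Fintype.card κ / 2 < agreeCount p.1 p.2} : ℝ) /
      Nat.card ((κ → V) × (κ → V)) ≤ exp (-(Fintype.card κ * lam * c ^ 2)) := by
  set M : ℝ := (Fintype.card V : ℝ)
  set n := Fintype.card κ
  set y := (exp (2 * c) - 1) * (lam / 2 - c)
  have hM : 0 < M := by positivity
  have hMc : M * (lam / 2 - c) = 1 := by rw [hc]; field_simp; ring
  have hy : y ≤ lam * c - lam * c ^ 2 :=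
    exp_two_mul_sub_one_mul_le hlam hcpos (by rw [hc]; linarith [one_div_pos.2 hM])
  have hy0 : 0 ≤ y := mul_nonneg (by linarith [add_one_le_exp (2 * c)]) (by nlinarith)
  have hcard : (Nat.card ((κ → V) × (κ → V)) : ℝ) = M ^ n * M ^ n := by
    simp [Nat.card_eq_fintype_card, M, n]
  rw [div_le_iff₀ (by rw [hcard]; positivity), ← mul_le_mul_iff_of_pos_right
    (exp_pos (2 * c * (lam * n / 2)))]
  calc _ ≤ (M * (exp (2 * c) + (M - 1))) ^ n :=
        natCard_agreeCount_gt_mul_exp_le _ _ (by positivity)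
    _ = M ^ n * M ^ n * (1 + y) ^ n := by
        rw [← mul_pow, ← mul_pow]; congr 1
        linear_combination -(M * (exp (2 * c) - 1)) * hMc
    _ ≤ M ^ n * M ^ n * exp y ^ n := by gcongr; linarith [add_one_le_exp y]
    _ ≤ M ^ n * M ^ n * exp (-(n * lam * c ^ 2) + 2 * c * (lam * n / 2)) := by
        rw [← exp_nat_mul]; gcongr; nlinarith [(Nat.cast_nonneg n : (0 : ℝ) ≤ n)]
    _ = _ := by rw [hcard, exp_add]; ring

end Agreement

theorem stmt9_general (M L N : ℕ) (hM : 0 < M)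
    (lam : ℝ) (hlam : lam ∈ Set.Ioo (0 : ℝ) (1 / 2))
    (c : ℝ) (hc : c = lam / 2 - 1 / M) (hcpos : 0 < c) :
    (Nat.card {K : Fin N → Fin L → Fin M // ∃ i j : Fin N, i ≠ j ∧
        lam * L / 2 < (Nat.card {l : Fin L // K i l = K j l} : ℝ)} : ℝ)
      / (Fintype.card (Fin N → Fin L → Fin M) : ℝ)
      ≤ (N : ℝ) * ((N : ℝ) - 1) * 2 ^ (-((L : ℝ) * lam * c ^ 2) / Real.log 2) := by
  have : NeZero M := ⟨hM.ne'⟩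
  have hpair := natCard_agreeCount_gt_div_le (κ := Fin L) (V := Fin M) hlam.2
    (by simpa using hc) hcpos
  rw [Fintype.card_fin] at hpair
  have hN : (0 : ℝ) ≤ N * (N - 1) := by
    rcases N with _ | n
    · simp
    · push_cast; simp only [add_sub_cancel_right]; positivity
  rw [rpow_div_log two_pos (by norm_num), ← Nat.card_eq_fintype_card]
  refine (Nat.card_exists_ne_div_le (ι := Fin N)
    fun f g : Fin L → Fin M => lam * L / 2 < (agreeCount f g : ℝ)).trans ?_
  rw [Fintype.card_fin]
  exact mul_le_mul_of_nonneg_left hpair hN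

/-- **Union bound over all pairs of coloring functions.** Let `M, L, N ≥ 1`,
`λ ∈ (0,1/2)` with `M > 2/λ`, and `c = λ/2 − 1/M > 0`. If an `N`-tuple `(K₁,…,K_N)` of
functions `{1,…,L} → {1,…,M}` is chosen uniformly at random (i.e., all `NL` values are
i.i.d. uniform on `{1,…,M}`), then the probability that some pair of distinct indices
`i ≠ j` satisfies `|{l : K_i(l) = K_j(l)}| > λL/2` is at most
`N(N−1)·2^{−Lλc²/ln 2}`. -/
theorem stmt9 (M L N : ℕ) (hM : 0 < M) (hL : 0 < L) (hN : 0 < N)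
    (lam : ℝ) (hlam : lam ∈ Set.Ioo (0 : ℝ) (1 / 2)) (hMlam : 2 / lam < M)
    (c : ℝ) (hc : c = lam / 2 - 1 / M) (hcpos : 0 < c) :
    (Nat.card {K : Fin N → Fin L → Fin M // ∃ i j : Fin N, i ≠ j ∧
        lam * L / 2 < (Nat.card {l : Fin L // K i l = K j l} : ℝ)} : ℝ)
      / (Fintype.card (Fin N → Fin L → Fin M) : ℝ)
      ≤ (N : ℝ) * ((N : ℝ) - 1) * 2 ^ (-((L : ℝ) * lam * c ^ 2) / Real.log 2) :=
  stmt9_general M L N hM lam hlam c hc hcpos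
end
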